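/- Let ψ = ψ_{s,1} (Bell state with t = 1). Then p_{0,0} = (1/2) sin²((μ + (-1)^s ν)/2) + 2(-1)^{s+1} sin²((η−ζ)/2) · P(μ/2, ν/2), where P(α,β) = cos α cos β sin α sin β. -/

import Mathlib

noncomputable def tr (k : Fin 2) (α : ℝ) : ℝ := if k = 0 then Real.cos α else Real.sin α

noncomputable def uvec (μ η : ℝ) (k : Fin 2) : EuclideanSpace ℂ (Fin 2) :=
  (WithLp.equiv 2 (Fin 2 → ℂ)).symm
    ![((-1 : ℂ)) ^ (k : ℕ) * Complex.exp (-(η : ℂ) * Complex.I) * (tr k (μ / 2) : ℂ),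
      (tr (k + 1) (μ / 2) : ℂ)]

noncomputable def ket (i : Fin 2) : EuclideanSpace ℂ (Fin 2) := EuclideanSpace.single i 1

noncomputable def tens (u v : EuclideanSpace ℂ (Fin 2)) : EuclideanSpace ℂ (Fin 2 × Fin 2) :=
  (WithLp.equiv 2 (Fin 2 × Fin 2 → ℂ)).symm fun p => u p.1 * v p.2

noncomputable def bell (s t : Fin 2) : EuclideanSpace ℂ (Fin 2 × Fin 2) :=
  ((Real.sqrt 2 : ℂ))⁻¹ • (tens (ket 0) (ket t) + ((-1 : ℂ)) ^ (s : ℕ) • tens (ket 1) (ket (t + 1)))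

/-- the probability p_{k,ℓ} = |⟨u^{(k)} ⊗ u^{(ℓ)} | ψ_{s,t}⟩|² -/
noncomputable def prob (μ η ν ζ : ℝ) (s t k ℓ : Fin 2) : ℝ :=
  ‖(inner ℂ (tens (uvec μ η k) (uvec ν ζ ℓ)) (bell s t) : ℂ)‖ ^ 2

/-- P(α,β) = cos α cos β sin α sin β -/
noncomputable def P (α β : ℝ) : ℝ := Real.cos α * Real.cos β * Real.sin α * Real.sin β

/-!
Against `ψ_{s,1}` the amplitude is `(a e^{iη} + b e^{iζ}) / √2` with real
`a = cos(μ/2) sin(ν/2)` and `b = (-1)^s sin(μ/2) cos(ν/2)`. For real `a, b` one has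
`|a e^{iη} + b e^{iζ}|² = (a + b)² - 4ab sin²((η - ζ)/2)`; by the addition formula
`(a + b)² = sin²((μ + (-1)^s ν)/2)`, and `ab = (-1)^s P(μ/2, ν/2)`.
-/

open Complex ComplexConjugate

theorem inner_tens_bell (u v : EuclideanSpace ℂ (Fin 2)) (s t : Fin 2) :
    inner ℂ (tens u v) (bell s t) =
      (Real.sqrt 2 : ℂ)⁻¹ * (conj (u 0) * conj (v t) + (-1) ^ (s : ℕ) * conj (u 1) * conj (v (t + 1))) := by
  fin_cases t <;>
  simp [PiLp.inner_apply, Fintype.sum_prod_type, tens, bell, ket] <;> ring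

theorem conj_uvec_zero_apply_zero (μ η : ℝ) :
    conj (uvec μ η 0 0) = Real.cos (μ / 2) * exp (η * I) := by
  simp only [uvec, tr, WithLp.equiv_symm_apply, PiLp.toLp_apply, Matrix.cons_val_zero, if_pos,
    Fin.val_zero, pow_zero, one_mul, map_mul, conj_ofReal, ← exp_conj, map_neg, conj_I]
  ring_nf

theorem conj_uvec_zero_apply_one (μ η : ℝ) : conj (uvec μ η 0 1) = Real.sin (μ / 2) := by
  simp only [uvec, tr, WithLp.equiv_symm_apply, PiLp.toLp_apply, Matrix.cons_val_one,
    Matrix.cons_val_zero, zero_add, one_ne_zero, if_false, conj_ofReal]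

theorem norm_sq_mul_exp_add_mul_exp (a b η ζ : ℝ) :
    ‖a * exp (η * I) + b * exp (ζ * I)‖ ^ 2 = (a + b) ^ 2 - 4 * a * b * Real.sin ((η - ζ) / 2) ^ 2 := by
  rw [Complex.sq_norm, Complex.normSq_apply, Real.sin_sq_eq_half_sub, mul_div_cancel₀ _ two_ne_zero,
    Real.cos_sub]
  simp only [add_re, add_im, mul_re, mul_im, ofReal_re, ofReal_im, exp_ofReal_mul_I_re,
    exp_ofReal_mul_I_im, zero_mul, sub_zero, add_zero]
  linear_combination a ^ 2 * Real.sin_sq_add_cos_sq η + b ^ 2 * Real.sin_sq_add_cos_sq ζ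

theorem cos_mul_sin_add_sign_mul_sin_mul_cos_sq (α β : ℝ) (s : Fin 2) :
    (Real.cos α * Real.sin β + (-1) ^ (s : ℕ) * (Real.sin α * Real.cos β)) ^ 2 =
      Real.sin (α + (-1) ^ (s : ℕ) * β) ^ 2 := by
  fin_cases s <;> simp [Real.sin_add] <;> ring

theorem stmt11 (μ η ν ζ : ℝ) (s : Fin 2) :
    prob μ η ν ζ s 1 0 0 =
      (1 / 2) * Real.sin ((μ + (-1 : ℝ) ^ (s : ℕ) * ν) / 2) ^ 2 +
        2 * (-1 : ℝ) ^ ((s : ℕ) + 1) * Real.sin ((η - ζ) / 2) ^ 2 * P (μ / 2) (ν / 2) := by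
  set a := Real.cos (μ / 2) * Real.sin (ν / 2)
  set b := (-1) ^ (s : ℕ) * (Real.sin (μ / 2) * Real.cos (ν / 2))
  have amplitude : inner ℂ (tens (uvec μ η 0) (uvec ν ζ 0)) (bell s 1) =
      (Real.sqrt 2 : ℂ)⁻¹ * (a * exp (η * I) + b * exp (ζ * I)) := by
    rw [inner_tens_bell, show (1 : Fin 2) + 1 = 0 from rfl, conj_uvec_zero_apply_zero,
      conj_uvec_zero_apply_zero, conj_uvec_zero_apply_one, conj_uvec_zero_apply_one]
    push_cast [a, b]
    ring
  rw [prob, amplitude, norm_mul, mul_pow, norm_sq_mul_exp_add_mul_exp, norm_inv, norm_real,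
    Real.norm_of_nonneg (Real.sqrt_nonneg 2), inv_pow, Real.sq_sqrt zero_le_two,
    cos_mul_sin_add_sign_mul_sin_mul_cos_sq, P, add_div, mul_div_assoc]
  ring
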